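/- arXiv:math/0011091 — 6 statements merged into one kernel-verified Lean document; each statement's English description precedes it below -/
import Mathlib

section
/- Let H be a numerical semigroup (a submonoid of ℕ with finite complement) with smallest nonzero element n₁(H) ≥ 3 and genus g(H) = #(ℕ \ H). Then for each i with 1 ≤ i ≤ g(H) - 2, the i-th smallest positive element nᵢ(H) of H satisfies nᵢ(H) ≥ 2i + 1. -/
/-!
Let `N = nᵢ` and suppose `N ≤ 2i`, so that `[0, N]` contains `i + 1` elements of `H`. For a gap `F`,
`x ↦ F - x` maps `H ∩ [0, F]` injectively into the gaps, so at most half of `[0, F]` lies in `H`.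
Applied to the first gap `l > N` this forces `N = 2i`, `l = 2i + 1`, and makes `[0, 2i + 1]`
symmetric: for each `x` in it, `x ∈ H` or `2i + 1 - x ∈ H`. If `m` is the first gap above `2i + 1`,
then `m - n₁` is a gap. If `m - n₁ < 2i + 1`, its reflection is a positive element of `H` below
`n₁`. If `m - n₁ = 2i + 1`, every element of `H` up to `2i + 1` is a multiple of `n₁`, which is
impossible since the gaps `1, 2` reflect to `2i, 2i - 1 ∈ H`. So `2i + 1` is the last gap, and
`g = i + 1`.
-/

open Finset

lemma Nat.mod_mem_of_sub_mem {S : Set ℕ} {n B : ℕ} (hn : 0 < n)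
    (hsub : ∀ x ∈ S, n ≤ x → x ≤ B → x - n ∈ S) : ∀ x ∈ S, x ≤ B → x % n ∈ S := by
  intro x
  induction x using Nat.strong_induction_on with
  | _ x ih =>
    intro hx hxB
    rcases lt_or_ge x n with hlt | hge
    · rwa [Nat.mod_eq_of_lt hlt]
    · rw [Nat.mod_eq_sub_mod hge]
      exact ih _ (by omega) (hsub x hx hge hxB) (by omega)

section

variable {H : Set ℕ}

lemma infinite_pos_mem_of_finite_compl (hfin : Hᶜ.Finite) : {n | 0 < n ∧ n ∈ H}.Infinite := by
  have : (H \ {0}).Infinite := by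
    simpa using hfin.infinite_compl.sdiff (Set.finite_singleton 0)
  convert this using 1
  ext n
  simp [Nat.pos_iff_ne_zero, and_comm]

lemma sub_notMem_of_notMem (hadd : ∀ a ∈ H, ∀ b ∈ H, a + b ∈ H) {F x : ℕ}
    (hF : F ∉ H) (hx : x ∈ H) (hxF : x ≤ F) : F - x ∉ H := fun h ↦
  hF (by simpa [Nat.add_sub_cancel' hxF] using hadd x hx _ h)

variable [DecidablePred (· ∈ H)]

lemma count_mem_succ_eq (h0 : 0 ∈ H) (M : ℕ) :
    Nat.count (· ∈ H) (M + 1) = Nat.count (fun n ↦ 0 < n ∧ n ∈ H) (M + 1) + 1 := by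
  simp [Nat.count_succ', h0]

lemma count_add_of_forall_mem {a b : ℕ} (h : ∀ k < b, a + k ∈ H) :
    Nat.count (· ∈ H) (a + b) = Nat.count (· ∈ H) a + b := by
  rw [Nat.count_add, Nat.count_of_forall h]

lemma count_add_card_filter_notMem (M : ℕ) :
    Nat.count (· ∈ H) M + #{x ∈ range M | x ∉ H} = M := by
  rw [Nat.count_eq_card_filter_range, card_filter_add_card_filter_not, card_range]

lemma ncard_compl_add_count_eq {M : ℕ} (h : ∀ x, M ≤ x → x ∈ H) :
    Hᶜ.ncard + Nat.count (· ∈ H) M = M := by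
  have hcompl : Hᶜ = ↑{x ∈ range M | x ∉ H} := by
    ext x
    simpa using fun hx ↦ lt_of_not_ge (mt (h x) hx)
  rw [hcompl, Set.ncard_coe_finset, add_comm, count_add_card_filter_notMem]

lemma exists_ge_notMem_of_lt {M : ℕ} (h : M < Hᶜ.ncard + Nat.count (· ∈ H) M) :
    ∃ x, M ≤ x ∧ x ∉ H := by
  by_contra! hM
  exact h.ne' (ncard_compl_add_count_eq hM)

lemma card_image_sub_filter_mem (F : ℕ) :
    ({x ∈ range (F + 1) | x ∈ H}.image (F - ·)).card = Nat.count (· ∈ H) (F + 1) := by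
  rw [card_image_of_injOn, Nat.count_eq_card_filter_range]
  intro x hx y hy hxy
  simp only [coe_filter, mem_range, Set.mem_ofPred_eq] at hx hy hxy
  omega

variable (hadd : ∀ a ∈ H, ∀ b ∈ H, a + b ∈ H)
include hadd

lemma image_sub_subset_filter_notMem {F : ℕ} (hF : F ∉ H) :
    {x ∈ range (F + 1) | x ∈ H}.image (F - ·) ⊆ {x ∈ range (F + 1) | x ∉ H} := by
  intro y hy
  obtain ⟨x, hx, rfl⟩ := mem_image.mp hy
  rw [mem_filter, mem_range] at hx ⊢
  exact ⟨by omega, sub_notMem_of_notMem hadd hF hx.2 (by omega)⟩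

lemma two_mul_count_le {F : ℕ} (hF : F ∉ H) : 2 * Nat.count (· ∈ H) (F + 1) ≤ F + 1 := by
  have hle := card_le_card (image_sub_subset_filter_notMem hadd hF)
  rw [card_image_sub_filter_mem] at hle
  have := count_add_card_filter_notMem (H := H) (F + 1)
  omega

lemma mem_or_sub_mem_of_two_mul_count_eq {F : ℕ} (hF : F ∉ H)
    (h : 2 * Nat.count (· ∈ H) (F + 1) = F + 1) : ∀ x ≤ F, x ∈ H ∨ F - x ∈ H := by
  refine fun x hx ↦ or_iff_not_imp_left.mpr fun hxH ↦ ?_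
  have hsplit := count_add_card_filter_notMem (H := H) (F + 1)
  have heq := eq_of_subset_of_card_le (image_sub_subset_filter_notMem hadd hF)
    (by rw [card_image_sub_filter_mem]; omega)
  have : x ∈ {x ∈ range (F + 1) | x ∉ H} := by simp [hxH]; omega
  obtain ⟨y, hy, rfl⟩ := mem_image.mp (heq ▸ this)
  rw [mem_filter, mem_range] at hy
  rw [Nat.sub_sub_self (by omega)]
  exact hy.2

lemma eq_two_mul_of_count_eq {N l i : ℕ} (hcount : Nat.count (· ∈ H) (N + 1) = i + 1)
    (hNi : N ≤ 2 * i) (hl : l ∉ H) (hNl : N < l) (hmem : ∀ x, N < x → x < l → x ∈ H) :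
    N = 2 * i ∧ l = 2 * i + 1 := by
  obtain ⟨k, rfl⟩ : ∃ k, l = N + 1 + k := ⟨l - N - 1, by omega⟩
  have hcount_l : Nat.count (· ∈ H) (N + 1 + k + 1) = i + 1 + k := by
    rw [Nat.count_succ_eq_count hl, count_add_of_forall_mem fun j hj ↦ hmem _ (by omega) (by omega),
      hcount]
  have := two_mul_count_le hadd hl
  omega

lemma forall_lt_mem_of_mem_or_sub_mem {n F : ℕ} (hn : n ∈ H) (hmin : ∀ x ∈ H, 0 < x → n ≤ x)
    (hn3 : 3 ≤ n) (hnF : n ≤ F) (hsymm : ∀ x ≤ F, x ∈ H ∨ F - x ∈ H) :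
    ∀ m, F < m → m ∈ H := by
  by_contra! hgap
  obtain ⟨hFm, hm⟩ := Nat.find_spec hgap
  set m := Nat.find hgap
  have hbelow_m : ∀ y, F < y → y < m → y ∈ H := fun y h₁ h₂ ↦
    by_contra fun hy ↦ Nat.find_min hgap h₂ ⟨h₁, hy⟩
  have hmn : m - n ∉ H := sub_notMem_of_notMem hadd hm hn (by omega)
  have hmnF : m - n ≤ F := by
    by_contra
    exact hmn (hbelow_m _ (by omega) (by omega))
  rcases hmnF.lt_or_eq with hlt | heq
  · have := hmin _ ((hsymm _ hlt.le).resolve_left hmn) (by omega)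
    omega
  · have hsub : ∀ x ∈ H, n ≤ x → x ≤ F → x - n ∈ H := fun x hx hnx hxF ↦ by
      have := (hsymm (m - x) (by omega)).resolve_left (sub_notMem_of_notMem hadd hm hx (by omega))
      rwa [show F - (m - x) = x - n by omega] at this
    have hdvd : ∀ x ∈ H, x ≤ F → n ∣ x := fun x hx hxF ↦ Nat.dvd_of_mod_eq_zero <| by
      by_contra h
      have := hmin _ (Nat.mod_mem_of_sub_mem (by omega) hsub x hx hxF) (by omega)
      have := Nat.mod_lt x (by omega : 0 < n)
      omega
    have hsmall : ∀ k, 0 < k → k < n → F - k ∈ H := fun k hk hkn ↦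
      (hsymm k (by omega)).resolve_left fun h ↦ by have := hmin k h hk; omega
    have := Nat.dvd_sub (hdvd _ (hsmall 1 one_pos (by omega)) (by omega))
      (hdvd _ (hsmall 2 two_pos (by omega)) (by omega))
    rw [show F - 1 - (F - 2) = 1 by omega] at this
    have := Nat.le_of_dvd one_pos this
    omega

theorem ncard_compl_le_of_le_two_mul {n N i : ℕ} (hn : n ∈ H) (hmin : ∀ x ∈ H, 0 < x → n ≤ x)
    (hn3 : 3 ≤ n) (hnN : n ≤ N) (hcount : Nat.count (· ∈ H) (N + 1) = i + 1) (hNi : N ≤ 2 * i) :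
    Hᶜ.ncard ≤ i + 1 := by
  by_contra! hg
  have hgap : ∃ l, N < l ∧ l ∉ H := exists_ge_notMem_of_lt (M := N + 1) (by omega)
  obtain ⟨hNl, hl⟩ := Nat.find_spec hgap
  obtain ⟨rfl, hl_eq⟩ := eq_two_mul_of_count_eq hadd hcount hNi hl hNl fun x h₁ h₂ ↦
    by_contra fun hx ↦ Nat.find_min hgap h₂ ⟨h₁, hx⟩
  rw [hl_eq] at hl
  have hcount' : Nat.count (· ∈ H) (2 * i + 1 + 1) = i + 1 := by
    rw [Nat.count_succ_eq_count hl, hcount]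
  have hsymm := mem_or_sub_mem_of_two_mul_count_eq hadd hl (by omega)
  have := ncard_compl_add_count_eq fun x (hx : 2 * i + 1 + 1 ≤ x) ↦
    forall_lt_mem_of_mem_or_sub_mem hadd hn hmin hn3 (by omega) hsymm x (by omega)
  omega

end

theorem stmt0_general (H : Set ℕ) (h0 : (0 : ℕ) ∈ H)
    (hadd : ∀ a ∈ H, ∀ b ∈ H, a + b ∈ H)
    (g : ℕ) (hg : g = Set.ncard (Hᶜ : Set ℕ))
    (hn1 : 3 ≤ Nat.nth (fun n => 0 < n ∧ n ∈ H) 0)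
    (i : ℕ) (h1 : 1 ≤ i) (h2 : i ≤ g - 2) :
    2 * i + 1 ≤ Nat.nth (fun n => 0 < n ∧ n ∈ H) (i - 1) := by
  classical
  have hPinf : {n | 0 < n ∧ n ∈ H}.Infinite :=
    infinite_pos_mem_of_finite_compl (Set.finite_of_ncard_pos (by omega))
  have hP := Nat.nth_mem_of_infinite hPinf
  have hcount : Nat.count (· ∈ H) (Nat.nth (fun n => 0 < n ∧ n ∈ H) (i - 1) + 1) = i + 1 := by
    rw [count_mem_succ_eq h0, Nat.count_succ_eq_succ_count (hP _), Nat.count_nth_of_infinite hPinf]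
    omega
  by_contra! hlt
  have := ncard_compl_le_of_le_two_mul hadd (hP 0).2
    (fun x hx hx0 ↦ Nat.nth_zero ▸ Nat.sInf_le ⟨hx0, hx⟩) hn1
    (Nat.nth_monotone hPinf (Nat.zero_le _)) hcount (by omega)
  omega

/-- For a numerical semigroup `H` (submonoid of ℕ with finite complement) with
multiplicity `n₁(H) ≥ 3` and genus `g`, the `i`-th smallest positive element
satisfies `nᵢ(H) ≥ 2i+1` for `1 ≤ i ≤ g-2`.  Here the `i`-th positive element
(1-indexed) is `Nat.nth (fun n => 0 < n ∧ n ∈ H) (i-1)`. -/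
theorem stmt0 (H : Set ℕ) (h0 : (0 : ℕ) ∈ H)
    (hadd : ∀ a ∈ H, ∀ b ∈ H, a + b ∈ H)
    (hfin : (Hᶜ : Set ℕ).Finite)
    (g : ℕ) (hg : g = Set.ncard (Hᶜ : Set ℕ))
    (hn1 : 3 ≤ Nat.nth (fun n => 0 < n ∧ n ∈ H) 0)
    (i : ℕ) (h1 : 1 ≤ i) (h2 : i ≤ g - 2) :
    2 * i + 1 ≤ Nat.nth (fun n => 0 < n ∧ n ∈ H) (i - 1) :=
  stmt0_general H h0 hadd g hg hn1 i h1 h2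
end

section
/- If H is a numerical semigroup with n₁(H) ≥ 3, then w(H) ≤ (g(H)² - 3g(H) + 4)/2. -/
/-!
For a gap `m` of `H`, the reflection `a ↦ m - a` sends the elements of `H` in `(0, m)` to gaps, so
twice the number of gaps below `m` is at least `m - 1` plus the number of ways to write `m` as a sum
of two gaps. Hence the `i`-th gap (counted from `0`) is at most `2i + 1`, and when `1, 2` are gaps
it is at most `2i` for `1 ≤ i ≤ g - 2`. Summing these bounds gives the estimate.
-/

open Finset

section

variable {H : Set ℕ}

lemma tsub_notMem_of_notMem (hadd : ∀ a ∈ H, ∀ b ∈ H, a + b ∈ H) {m a : ℕ}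
    (hm : m ∉ H) (ha : a ∈ H) (ham : a ≤ m) : m - a ∉ H := fun h ↦
  hm (Nat.add_sub_cancel' ham ▸ hadd a ha (m - a) h)

lemma sub_one_add_card_le_two_mul_count [DecidablePred (· ∈ H)]
    (hadd : ∀ a ∈ H, ∀ b ∈ H, a + b ∈ H) {m : ℕ} (hm : m ∉ H) :
    m - 1 + #{a ∈ Ioo 0 m | a ∉ H ∧ m - a ∉ H} ≤ 2 * Nat.count (· ∉ H) m := by
  set S := {a ∈ Ioo 0 m | a ∉ H}
  have hS : #S ≤ Nat.count (· ∉ H) m := by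
    rw [Nat.count_eq_card_filter_range]
    exact card_le_card (filter_subset_filter _ fun a ha ↦ by simp only [mem_Ioo, mem_range] at ha ⊢; omega)
  have hreflect : #(S.image (m - ·)) = #S :=
    card_image_of_injOn fun a ha b hb hab ↦ by simp [S] at ha hb hab; omega
  have hcover : Ioo 0 m ⊆ S ∪ S.image (m - ·) := by
    intro a ha
    rw [mem_Ioo] at ha
    by_cases haH : a ∈ H
    · refine mem_union_right _ (mem_image.2 ⟨m - a, ?_, by omega⟩)
      simpa [S, ha.1, ha.2, ha.1.trans ha.2] using tsub_notMem_of_notMem hadd hm haH ha.2.le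
    · exact mem_union_left _ (by simp [S, ha.1, ha.2, haH])
  have hoverlap : {a ∈ Ioo 0 m | a ∉ H ∧ m - a ∉ H} ⊆ S ∩ S.image (m - ·) := by
    intro a ha
    simp only [mem_filter, mem_Ioo] at ha
    refine mem_inter.2 ⟨by simp [S, ha], mem_image.2 ⟨m - a, ?_, by omega⟩⟩
    exact mem_filter.2 ⟨mem_Ioo.2 ⟨by omega, by omega⟩, ha.2.2⟩
  have := card_le_card hcover
  have := card_le_card hoverlap
  have := card_union_add_card_inter S (S.image (m - ·))
  simp only [Nat.card_Ioo] at *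
  omega

lemma le_two_mul_count_add_one [DecidablePred (· ∈ H)]
    (hadd : ∀ a ∈ H, ∀ b ∈ H, a + b ∈ H) {m : ℕ} (hm : m ∉ H) :
    m ≤ 2 * Nat.count (· ∉ H) m + 1 := by
  have := sub_one_add_card_le_two_mul_count hadd hm
  omega

lemma add_one_le_two_mul_count_of_add_eq [DecidablePred (· ∈ H)]
    (hadd : ∀ a ∈ H, ∀ b ∈ H, a + b ∈ H) {m a b : ℕ} (hm : m ∉ H) (ha : a ∉ H) (hb : b ∉ H)
    (ha0 : 0 < a) (hb0 : 0 < b) (hab : a ≠ b) (habm : a + b = m) :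
    m + 1 ≤ 2 * Nat.count (· ∉ H) m := by
  have hpair : {a, b} ⊆ {x ∈ Ioo 0 m | x ∉ H ∧ m - x ∉ H} := by
    intro x hx
    simp only [mem_insert, mem_singleton] at hx
    simp only [mem_filter, mem_Ioo]
    rcases hx with rfl | rfl
    · exact ⟨⟨ha0, by omega⟩, ha, by rwa [show m - x = b by omega]⟩
    · exact ⟨⟨hb0, by omega⟩, hb, by rwa [show m - x = a by omega]⟩
  have := card_le_card hpair
  rw [card_pair hab] at this
  have := sub_one_add_card_le_two_mul_count hadd hm
  omega

lemma nth_gap_notMem (hfin : Hᶜ.Finite) {i : ℕ} (hi : i < Hᶜ.ncard) :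
    Nat.nth (· ∉ H) i ∉ H :=
  Nat.nth_mem_of_lt_card hfin (by rwa [← Set.ncard_eq_toFinset_card _ hfin])

lemma nth_gap_lt_nth_gap (hfin : Hᶜ.Finite) {i j : ℕ} (hij : i < j) (hj : j < Hᶜ.ncard) :
    Nat.nth (· ∉ H) i < Nat.nth (· ∉ H) j :=
  Nat.nth_lt_nth_of_lt_card hfin hij (by rwa [← Set.ncard_eq_toFinset_card _ hfin])

lemma count_nth_gap [DecidablePred (· ∈ H)] (hfin : Hᶜ.Finite) {i : ℕ} (hi : i < Hᶜ.ncard) :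
    Nat.count (· ∉ H) (Nat.nth (· ∉ H) i) = i :=
  Nat.count_nth_of_lt_card_finite hfin (by rwa [← Set.ncard_eq_toFinset_card _ hfin])

lemma nth_gap_le_two_mul_add_one (hadd : ∀ a ∈ H, ∀ b ∈ H, a + b ∈ H) (hfin : Hᶜ.Finite)
    {i : ℕ} (hi : i < Hᶜ.ncard) : Nat.nth (· ∉ H) i ≤ 2 * i + 1 := by
  classical
  simpa [count_nth_gap hfin hi] using le_two_mul_count_add_one hadd (nth_gap_notMem hfin hi)

/-- If the `i`-th gap were `2i + 1`, the next gap `m` would be at most `2i + 3`, so `m` would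
split into the two distinct gaps `2i + 1` and `m - (2i + 1) ∈ {1, 2}`. -/
lemma nth_gap_le_two_mul (hadd : ∀ a ∈ H, ∀ b ∈ H, a + b ∈ H) (hfin : Hᶜ.Finite)
    (h1 : 1 ∉ H) (h2 : 2 ∉ H) {i : ℕ} (hi : 1 ≤ i) (hig : i + 1 < Hᶜ.ncard) :
    Nat.nth (· ∉ H) i ≤ 2 * i := by
  classical
  by_contra! hlt
  have hℓ : Nat.nth (· ∉ H) i = 2 * i + 1 :=
    (nth_gap_le_two_mul_add_one hadd hfin (by omega)).antisymm hlt
  set m := Nat.nth (· ∉ H) (i + 1)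
  have hm_lt : 2 * i + 1 < m := hℓ ▸ nth_gap_lt_nth_gap hfin (lt_add_one i) hig
  have hm_le : m ≤ 2 * (i + 1) + 1 := nth_gap_le_two_mul_add_one hadd hfin hig
  have hd : m - (2 * i + 1) ∉ H := by
    rcases (by omega : m - (2 * i + 1) = 1 ∨ m - (2 * i + 1) = 2) with h | h <;> rw [h] <;>
      assumption
  have := add_one_le_two_mul_count_of_add_eq hadd (nth_gap_notMem hfin hig) hd
    (hℓ ▸ nth_gap_notMem hfin (by omega)) (by omega) (by omega) (by omega) (by omega)
  rw [count_nth_gap hfin hig] at this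
  omega

lemma notMem_of_lt_nth_zero {a : ℕ} (ha0 : 0 < a)
    (ha : a < Nat.nth (fun n ↦ 0 < n ∧ n ∈ H) 0) : a ∉ H := fun haH ↦
  ha.not_ge (Nat.nth_zero ▸ Nat.sInf_le ⟨ha0, haH⟩)

lemma nth_gap_sub_le (hadd : ∀ a ∈ H, ∀ b ∈ H, a + b ∈ H) (hfin : Hᶜ.Finite)
    (h1 : 1 ∉ H) (h2 : 2 ∉ H) {i : ℕ} (hig : i + 1 < Hᶜ.ncard) :
    Nat.nth (· ∉ H) i - (i + 1) ≤ i - 1 := by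
  rcases Nat.eq_zero_or_pos i with rfl | hi
  · have : Nat.nth (· ∉ H) 0 ≤ 1 := Nat.nth_zero ▸ Nat.sInf_le h1
    omega
  · have := nth_gap_le_two_mul hadd hfin h1 h2 hi hig
    omega

end

lemma two_mul_sum_range_sub_one_add_le (n : ℕ) :
    2 * ∑ i ∈ range n, (i - 1) + 3 * n ≤ n ^ 2 + 2 := by
  induction n with
  | zero => simp
  | succ n ih =>
    rw [sum_range_succ]
    rcases n with _ | n
    · simp
    · simp only [add_tsub_cancel_right] at ih ⊢
      nlinarith

theorem stmt3_general (H : Set ℕ)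
    (hadd : ∀ a ∈ H, ∀ b ∈ H, a + b ∈ H)
    (hfin : (Hᶜ : Set ℕ).Finite)
    (g w : ℕ) (hg : g = Set.ncard (Hᶜ : Set ℕ))
    (hw : w = ∑ i ∈ Finset.range g, (Nat.nth (fun n => n ∉ H) i - (i + 1)))
    (hn1 : 3 ≤ Nat.nth (fun n => 0 < n ∧ n ∈ H) 0) :
    (w : ℤ) ≤ ((g : ℤ) ^ 2 - 3 * (g : ℤ) + 4) / 2 := by
  have h1 : 1 ∉ H := notMem_of_lt_nth_zero one_pos (by omega)
  have h2 : 2 ∉ H := notMem_of_lt_nth_zero two_pos (by omega)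
  obtain rfl | ⟨n, rfl⟩ : g = 0 ∨ ∃ n, g = n + 1 := by cases g <;> simp
  · simp [hw]
  have hweight : w ≤ ∑ i ∈ range n, (i - 1) + n := by
    rw [hw, sum_range_succ]
    refine add_le_add (sum_le_sum fun i hi ↦ ?_) ?_
    · exact nth_gap_sub_le hadd hfin h1 h2 (by rw [mem_range] at hi; omega)
    · have := nth_gap_le_two_mul_add_one hadd hfin (i := n) (by omega)
      omega
  have hsum := two_mul_sum_range_sub_one_add_le n
  have hkey : 2 * w + n ≤ n ^ 2 + 2 := by omega
  rw [Int.le_ediv_iff_mul_le two_pos]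
  push_cast
  linarith [(by exact_mod_cast hkey : (2 * w + n : ℤ) ≤ n ^ 2 + 2)]

/-- If `H` is a numerical semigroup with multiplicity `n₁(H) ≥ 3`, then its
weight satisfies `w(H) ≤ (g(H)² - 3g(H) + 4)/2`. -/
theorem stmt3 (H : Set ℕ) (h0 : (0 : ℕ) ∈ H)
    (hadd : ∀ a ∈ H, ∀ b ∈ H, a + b ∈ H)
    (hfin : (Hᶜ : Set ℕ).Finite)
    (g w : ℕ) (hg : g = Set.ncard (Hᶜ : Set ℕ))
    (hw : w = ∑ i ∈ Finset.range g, (Nat.nth (fun n => n ∉ H) i - (i + 1)))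
    (hn1 : 3 ≤ Nat.nth (fun n => 0 < n ∧ n ∈ H) 0) :
    (w : ℤ) ≤ ((g : ℤ) ^ 2 - 3 * (g : ℤ) + 4) / 2 :=
  stmt3_general H hadd hfin g w hg hw hn1
end

section
/- Let F be a field of characteristic p > 0 and let D^i, i ∈ ℕ, be F-linear maps on an F-algebra satisfying D^0 = id and D^i ∘ D^j = C(i+j,i) D^{i+j}. Then for 0 ≤ a < p and α ∈ ℕ, D^{a·p^α} = (D^{p^α})^a / a!, and for 0 ≤ a, b < p and α ≠ β, D^{a p^α + b p^β} = D^{a p^α} ∘ D^{b p^β}. -/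
open Nat

lemma key1 (p : ℕ) [Fact p.Prime] (a α : ℕ) :
    ((a + 1) * p ^ α).choose (a * p ^ α) ≡ (a + 1) [MOD p] := by
  induction α with
  | zero => simpa using Nat.ModEq.refl _
  | succ α ih =>
    have h := Choose.choose_modEq_choose_mod_mul_choose_div_nat
      (p := p) (n := (a + 1) * p ^ (α + 1)) (k := a * p ^ (α + 1))
    have hp : 0 < p := (Fact.out : p.Prime).pos
    rw [pow_succ, ← mul_assoc, ← mul_assoc, Nat.mul_mod_left, Nat.mul_mod_left,
      Nat.mul_div_cancel _ hp, Nat.mul_div_cancel _ hp] at h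
    rw [pow_succ, ← mul_assoc, ← mul_assoc]
    refine h.trans ?_
    simpa using ih.mul_left 1

lemma key2 (p : ℕ) [Fact p.Prime] (a b α m : ℕ) (hm : 1 ≤ m) (ha : a < p) :
    (a * p ^ α + b * p ^ (α + m)).choose (a * p ^ α) ≡ 1 [MOD p] := by
  induction α with
  | zero =>
    have h := Choose.choose_modEq_choose_mod_mul_choose_div_nat
      (p := p) (n := a * p ^ 0 + b * p ^ (0 + m)) (k := a * p ^ 0)
    have hp : 0 < p := (Fact.out : p.Prime).pos
    obtain ⟨m, rfl⟩ := Nat.exists_eq_add_of_le hm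
    have e : (0 : ℕ) + (1 + m) = m + 1 := by ring
    rw [e, pow_zero, mul_one, pow_succ, ← mul_assoc] at h ⊢
    rw [Nat.add_mul_mod_self_right, Nat.mod_eq_of_lt ha,
      Nat.add_mul_div_right _ _ hp, Nat.div_eq_of_lt ha] at h
    simpa using h
  | succ α ih =>
    have h := Choose.choose_modEq_choose_mod_mul_choose_div_nat
      (p := p) (n := a * p ^ (α + 1) + b * p ^ (α + 1 + m)) (k := a * p ^ (α + 1))
    have hp : 0 < p := (Fact.out : p.Prime).pos
    have e1 : α + 1 + m = (α + m) + 1 := by ring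
    rw [e1, pow_succ, pow_succ, ← mul_assoc, ← mul_assoc, ← add_mul] at h ⊢
    rw [Nat.mul_mod_left, Nat.mul_mod_left, Nat.mul_div_cancel _ hp,
      Nat.mul_div_cancel _ hp] at h
    refine h.trans ?_
    simpa using ih.mul_left 1

/-- Let `F` be a field of characteristic `p > 0` and `D i` `F`-linear
endomorphisms of an `F`-module `A` satisfying `D 0 = id` and
`D i ∘ D j = C(i+j, i) • D (i+j)`.  Then for `0 ≤ a < p` and `α ∈ ℕ`,
`a! • D (a·p^α) = (D (p^α))^a`, and for `0 ≤ a, b < p` and `α ≠ β`,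
`D (a·p^α + b·p^β) = D (a·p^α) ∘ D (b·p^β)`. -/
theorem stmt7 (F : Type*) [Field F] (A : Type*) [AddCommGroup A] [Module F A]
    (p : ℕ) [Fact (Nat.Prime p)] [CharP F p]
    (D : ℕ → Module.End F A)
    (hD0 : D 0 = 1)
    (hcomp : ∀ i j : ℕ, D i * D j = (((i + j).choose i : F)) • D (i + j)) :
    (∀ a α : ℕ, a < p → (a.factorial : F) • D (a * p ^ α) = (D (p ^ α)) ^ a) ∧
    (∀ a b α β : ℕ, a < p → b < p → α ≠ β →
      D (a * p ^ α + b * p ^ β) = D (a * p ^ α) * D (b * p ^ β)) := by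
  constructor
  · intro a α ha
    induction a with
    | zero => simp [hD0]
    | succ a ih =>
      have ha' : a < p := Nat.lt_of_succ_lt ha
      have hch : (((a * p ^ α + p ^ α).choose (a * p ^ α) : ℕ) : F) = ((a + 1 : ℕ) : F) := by
        rw [CharP.natCast_eq_natCast F p]
        have := key1 p a α
        rwa [succ_mul] at this
      rw [pow_succ, ← ih ha', smul_mul_assoc, hcomp, smul_smul, hch, succ_mul]
      congr 1
      push_cast [Nat.factorial_succ]
      ring
  · intro a b α β ha hb hne
    rw [hcomp]
    have hone : (((a * p ^ α + b * p ^ β).choose (a * p ^ α) : ℕ) : F) = 1 := by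
      rcases Nat.lt_or_ge α β with h | h
      · obtain ⟨m, rfl⟩ := Nat.exists_eq_add_of_lt h
        have h1 : (a * p ^ α + b * p ^ (α + m + 1)).choose (a * p ^ α) ≡ 1 [MOD p] := by
          simpa [add_assoc] using key2 p a b α (m + 1) (Nat.succ_le_succ (Nat.zero_le m)) ha
        have := (CharP.natCast_eq_natCast F p).mpr h1
        simpa using this
      · have hlt : β < α := lt_of_le_of_ne h (Ne.symm hne)
        obtain ⟨m, rfl⟩ := Nat.exists_eq_add_of_lt hlt
        rw [← Nat.choose_symm (Nat.le_add_right _ _), Nat.add_sub_cancel_left, add_comm]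
        have h1 : (b * p ^ β + a * p ^ (β + m + 1)).choose (b * p ^ β) ≡ 1 [MOD p] := by
          simpa [add_assoc] using key2 p b a β (m + 1) (Nat.succ_le_succ (Nat.zero_le m)) hb
        have := (CharP.natCast_eq_natCast F p).mpr h1
        simpa using this
    rw [hone, one_smul]
end

section
/- For q = 2^{2s+1} with q₀ = 2^s, the numerical semigroup H = ⟨q, q+q₀, q+2q₀, q+2q₀+1⟩ generated by q, q+q₀, q+2q₀, q+2q₀+1 has genus #(ℕ \ H) = q₀(q-1). -/
/-!
Put `q = 2p²` and write `n = p m + r` with `r < p`. A sum of generators of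
`⟨q, q + p, q + 2p, q + 2p + 1⟩` has this form exactly when `m` lies in one of the blocks
`[2pA + 2r, 2pA + 2A]`, `A ≥ r`. These blocks are disjoint for `A < p + r` and, from `A = p + r` on,
they cover every `m ≥ 2p(p + r) + 2r`. So the residue `r` contributes
`2p(p + r) + 2r - p² = p² + 2pr + 2r` gaps, and summing over `r < p` gives `p(2p² - 1)`.
-/

open Finset

theorem AddSubmonoid.mem_closure_quadruple {M : Type*} [AddCommMonoid M] (a b c d x : M) :
    x ∈ closure ({a, b, c, d} : Set M) ↔ ∃ i j k l : ℕ, i • a + j • b + k • c + l • d = x := by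
  simp_rw [← Set.singleton_union, closure_union, mem_sup, mem_closure_singleton,
    exists_exists_eq_and, add_assoc]
  constructor
  · rintro ⟨i, _, ⟨j, _, ⟨k, l, rfl⟩, rfl⟩, rfl⟩
    exact ⟨i, j, k, l, rfl⟩
  · rintro ⟨i, j, k, l, rfl⟩
    exact ⟨i, _, ⟨j, _, ⟨k, l, rfl⟩, rfl⟩, rfl⟩

theorem Nat.eq_and_eq_of_mul_add_eq_mul_add {p m r m' r' : ℕ} (hr : r < p) (hr' : r' < p)
    (h : p * m + r = p * m' + r') : m = m' ∧ r = r' := by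
  have hp : 0 < p := by omega
  have h₁ := (Nat.div_mod_unique hp).2 ⟨(add_comm _ _ : r + p * m = _), hr⟩
  have h₂ := (Nat.div_mod_unique hp).2 ⟨(add_comm _ _ : r' + p * m' = _), hr'⟩
  rw [h] at h₁
  omega

theorem Finset.sum_range_two_mul_add_one (n : ℕ) : ∑ i ∈ range n, (2 * i + 1) = n ^ 2 := by
  induction n with
  | zero => simp
  | succ n ih => rw [sum_range_succ, ih]; ring

def suzukiSemigroup (p : ℕ) : AddSubmonoid ℕ :=
  AddSubmonoid.closure {2 * p ^ 2, 2 * p ^ 2 + p, 2 * p ^ 2 + 2 * p, 2 * p ^ 2 + 2 * p + 1}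

namespace suzukiSemigroup

def slice (p r : ℕ) : Set ℕ := {m | ∃ A, 2 * p * A + 2 * r ≤ m ∧ m ≤ 2 * p * A + 2 * A}

variable {p r m : ℕ}

theorem mul_add_mem_iff (hr : r < p) : p * m + r ∈ suzukiSemigroup p ↔ m ∈ slice p r := by
  simp only [suzukiSemigroup, slice, AddSubmonoid.mem_closure_quadruple, smul_eq_mul]
  constructor
  · rintro ⟨a, b, c, d, h⟩
    obtain ⟨k, e, he, rfl⟩ : ∃ k e, e < p ∧ d = p * k + e :=
      ⟨d / p, d % p, Nat.mod_lt _ (by omega), (Nat.div_add_mod d p).symm⟩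
    have h' : p * (2 * p * (a + b + c + (p * k + e) + k) + (b + 2 * c + 2 * e + k)) + e
        = p * m + r := by rw [← h]; ring
    obtain ⟨rfl, rfl⟩ := Nat.eq_and_eq_of_mul_add_eq_mul_add he hr h'
    exact ⟨a + b + c + (p * k + e) + k, by omega, by omega⟩
  · rintro ⟨A, h₁, h₂⟩
    obtain ⟨t, rfl⟩ : ∃ t, m = 2 * p * A + 2 * r + t := ⟨m - (2 * p * A + 2 * r), by omega⟩
    obtain ⟨b, c, hb, rfl⟩ : ∃ b c, b ≤ 1 ∧ t = b + 2 * c := ⟨t % 2, t / 2, by omega, by omega⟩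
    obtain ⟨a, rfl⟩ : ∃ a, A = a + r + b + c := ⟨A - r - b - c, by omega⟩
    exact ⟨a, b, c, r, by ring⟩

theorem mem_slice_of_le (hp : 0 < p) (hm : 2 * p * (p + r) + 2 * r ≤ m) : m ∈ slice p r := by
  have h2p : 0 < 2 * p := by omega
  have hA : p + r ≤ (m - 2 * r) / (2 * p) := (Nat.le_div_iff_mul_le h2p).2 (by rw [mul_comm]; omega)
  have hdiv := Nat.div_add_mod (m - 2 * r) (2 * p)
  have hmod := Nat.mod_lt (m - 2 * r) h2p
  exact ⟨(m - 2 * r) / (2 * p), by omega, by omega⟩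

def sliceGaps (p r : ℕ) : Finset ℕ :=
  range (2 * p * (p + r) + 2 * r) \
    (Ico r (p + r)).biUnion fun A ↦ Icc (2 * p * A + 2 * r) (2 * p * A + 2 * A)

theorem mem_sliceGaps (hp : 0 < p) : m ∈ sliceGaps p r ↔ m ∉ slice p r := by
  simp only [sliceGaps, slice, mem_sdiff, mem_range, mem_biUnion, mem_Ico, mem_Icc]
  constructor
  · rintro ⟨hm, hnot⟩ ⟨A, h₁, h₂⟩
    refine hnot ⟨A, ⟨by omega, ?_⟩, h₁, h₂⟩
    by_contra! hA
    have : 2 * p * (p + r) ≤ 2 * p * A := Nat.mul_le_mul_left _ hA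
    omega
  · intro h
    refine ⟨?_, fun ⟨A, _, hA⟩ ↦ h ⟨A, hA⟩⟩
    by_contra! hm
    exact h (mem_slice_of_le hp hm)

theorem card_sliceGaps : #(sliceGaps p r) = p ^ 2 + 2 * p * r + 2 * r := by
  have hdisj : (Ico r (p + r) : Set ℕ).PairwiseDisjoint
      fun A ↦ Icc (2 * p * A + 2 * r) (2 * p * A + 2 * A) := by
    intro A hA A' hA' hne
    simp only [coe_Ico, Set.mem_Ico] at hA hA'
    rw [Function.onFun, disjoint_left]
    intro x hx hx'
    simp only [mem_Icc] at hx hx'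
    rcases Nat.lt_or_gt_of_ne hne with hlt | hlt
    · have : 2 * p * (A + 1) ≤ 2 * p * A' := Nat.mul_le_mul_left _ hlt
      linarith
    · have : 2 * p * (A' + 1) ≤ 2 * p * A := Nat.mul_le_mul_left _ hlt
      linarith
  have hsub : ((Ico r (p + r)).biUnion fun A ↦ Icc (2 * p * A + 2 * r) (2 * p * A + 2 * A))
      ⊆ range (2 * p * (p + r) + 2 * r) := by
    intro x hx
    simp only [mem_biUnion, mem_Ico, mem_Icc, mem_range] at hx ⊢
    obtain ⟨A, ⟨_, hA⟩, _, hx⟩ := hx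
    have : 2 * p * (A + 1) ≤ 2 * p * (p + r) := Nat.mul_le_mul_left _ hA
    linarith
  have hblocks : ∑ A ∈ Ico r (p + r), #(Icc (2 * p * A + 2 * r) (2 * p * A + 2 * A)) = p ^ 2 := by
    rw [sum_Ico_eq_sum_range, Nat.add_sub_cancel, ← sum_range_two_mul_add_one]
    refine sum_congr rfl fun k _ ↦ ?_
    rw [Nat.card_Icc]
    omega
  rw [sliceGaps, card_sdiff_of_subset hsub, card_biUnion hdisj, hblocks, card_range]
  have : 2 * p * (p + r) + 2 * r = p ^ 2 + (p ^ 2 + 2 * p * r + 2 * r) := by ring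
  omega

def gaps (p : ℕ) : Finset ℕ :=
  ((range p).sigma (sliceGaps p)).image fun x ↦ p * x.2 + x.1

theorem mem_gaps {n : ℕ} (hp : 0 < p) : n ∈ gaps p ↔ n ∉ suzukiSemigroup p := by
  simp only [gaps, mem_image, mem_sigma, mem_range, Sigma.exists]
  constructor
  · rintro ⟨r, m, ⟨hr, hm⟩, rfl⟩
    rwa [mul_add_mem_iff hr, ← mem_sliceGaps hp]
  · intro hn
    have hr := Nat.mod_lt n hp
    rw [← Nat.div_add_mod n p, mul_add_mem_iff hr, ← mem_sliceGaps hp] at hn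
    exact ⟨n % p, n / p, ⟨hr, hn⟩, Nat.div_add_mod n p⟩

theorem card_gaps : #(gaps p) = p * (2 * p ^ 2 - 1) := by
  have hinj : Set.InjOn (fun x : (_ : ℕ) × ℕ ↦ p * x.2 + x.1) ((range p).sigma (sliceGaps p)) := by
    rintro ⟨r, m⟩ hx ⟨r', m'⟩ hx' h
    simp only [coe_sigma, Set.mem_sigma_iff, coe_range, Set.mem_Iio] at hx hx'
    obtain ⟨rfl, rfl⟩ := Nat.eq_and_eq_of_mul_add_eq_mul_add hx.1 hx'.1 h
    rfl
  rw [gaps, card_image_of_injOn hinj, card_sigma]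
  simp only [card_sliceGaps]
  rcases p with _ | k
  · simp
  have hgauss : (∑ r ∈ range (k + 1), r) * 2 = (k + 1) * k := sum_range_id_mul_two (k + 1)
  have hsub : 2 * (k + 1) ^ 2 - 1 = 2 * k ^ 2 + 4 * k + 1 := by
    rw [show 2 * (k + 1) ^ 2 = 2 * k ^ 2 + 4 * k + 1 + 1 by ring, Nat.add_sub_cancel]
  calc ∑ r ∈ range (k + 1), ((k + 1) ^ 2 + 2 * (k + 1) * r + 2 * r)
      = (k + 1) * (k + 1) ^ 2 + (k + 2) * ((∑ r ∈ range (k + 1), r) * 2) := by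
        rw [sum_add_distrib, sum_add_distrib, sum_const, card_range, ← mul_sum, ← mul_sum]
        ring
    _ = (k + 1) * (2 * (k + 1) ^ 2 - 1) := by rw [hgauss, hsub]; ring

theorem ncard_setOf_notMem (p : ℕ) :
    {n | n ∉ suzukiSemigroup p}.ncard = p * (2 * p ^ 2 - 1) := by
  rcases p.eq_zero_or_pos with rfl | hp
  · have hone : 1 ∈ suzukiSemigroup 0 := AddSubmonoid.subset_closure (by simp)
    have hall (n : ℕ) : n ∈ suzukiSemigroup 0 := by simpa using nsmul_mem hone n
    simp [hall]
  · rw [← card_gaps, ← Set.ncard_coe_finset]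
    congr
    ext n
    simp [mem_gaps hp]

end suzukiSemigroup

theorem stmt13_general (q0 q : ℕ) (hq : q = 2 * q0 ^ 2) :
    Set.ncard {n : ℕ |
        n ∉ AddSubmonoid.closure ({q, q + q0, q + 2 * q0, q + 2 * q0 + 1} : Set ℕ)}
      = q0 * (q - 1) := by
  subst hq
  exact suzukiSemigroup.ncard_setOf_notMem q0

/-- For `q = 2^{2s+1}` with `q₀ = 2^s`, the numerical semigroup
`H = ⟨q, q+q₀, q+2q₀, q+2q₀+1⟩` has genus `#(ℕ \ H) = q₀(q-1)`.
(This is the Weierstrass semigroup at a rational point of the Suzuki curve.) -/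
theorem stmt13 (s q0 q : ℕ) (hs : 1 ≤ s) (hq0 : q0 = 2 ^ s) (hq : q = 2 * q0 ^ 2) :
    Set.ncard {n : ℕ |
        n ∉ AddSubmonoid.closure ({q, q + q0, q + 2 * q0, q + 2 * q0 + 1} : Set ℕ)}
      = q0 * (q - 1) :=
  stmt13_general q0 q hq
end

section
/- For q = 2^{2s+1} with q₀ = 2^s (s ≥ 1), the numerical semigroup H = ⟨q, q+2q₀-1, q+2q₀, q+2q₀+1⟩ has genus #(ℕ \ H) = q₀(q - 1) - q₀²/4. -/
section NumSgpGenus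


def gfun (q0 i j : ℕ) : ℕ :=
  if i ≤ j then j
  else if 2*q0 ≤ i + j + 1 then j+1
  else if i ≤ j + q0 then j + q0 + 1
  else j + q0 + 2

lemma gfun_le_top (q0 i j : ℕ) : gfun q0 i j ≤ j + q0 + 2 := by
  unfold gfun; split_ifs <;> omega

lemma gfun_le_mid (q0 i j : ℕ) (h : i ≤ j + q0) : gfun q0 i j ≤ j + q0 + 1 := by
  unfold gfun; split_ifs <;> omega

lemma gfun_of_le (q0 i j : ℕ) (h : i ≤ j) : gfun q0 i j = j := by
  unfold gfun; split_ifs <;> omega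

lemma gfun_of_big (q0 i j : ℕ) (h : 2*q0 ≤ i + j + 1) (h2 : j < i) : gfun q0 i j = j + 1 := by
  unfold gfun; split_ifs <;> omega

/-- membership in the closure of the 4-element set is equivalent to a linear representation -/
lemma mem_closure_iff_rep (q0 q x : ℕ) (hq0 : 2 ≤ q0) (hq : q = 2*q0^2) :
    x ∈ AddSubmonoid.closure ({q, q + 2 * q0 - 1, q + 2 * q0, q + 2 * q0 + 1} : Set ℕ)
    ↔ ∃ a b c d : ℕ, x = a*q + b*(q+2*q0-1) + c*(q+2*q0) + d*(q+2*q0+1) := by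
  constructor
  · intro hx
    induction hx using AddSubmonoid.closure_induction with
    | mem y hy =>
      rcases hy with rfl | rfl | rfl | rfl
      · exact ⟨1, 0, 0, 0, by ring⟩
      · exact ⟨0, 1, 0, 0, by ring⟩
      · exact ⟨0, 0, 1, 0, by ring⟩
      · exact ⟨0, 0, 0, 1, by ring⟩
    | zero => exact ⟨0, 0, 0, 0, by ring⟩
    | add y z hy hz ihy ihz =>
      obtain ⟨a, b, c, d, rfl⟩ := ihy
      obtain ⟨a', b', c', d', rfl⟩ := ihz
      exact ⟨a+a', b+b', c+c', d+d', by ring⟩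
  · rintro ⟨a, b, c, d, rfl⟩
    have m1 : q ∈ AddSubmonoid.closure ({q, q + 2 * q0 - 1, q + 2 * q0, q + 2 * q0 + 1} : Set ℕ) :=
      AddSubmonoid.subset_closure (by simp)
    have m2 : q + 2*q0 - 1 ∈ AddSubmonoid.closure ({q, q + 2 * q0 - 1, q + 2 * q0, q + 2 * q0 + 1} : Set ℕ) :=
      AddSubmonoid.subset_closure (by simp)
    have m3 : q + 2*q0 ∈ AddSubmonoid.closure ({q, q + 2 * q0 - 1, q + 2 * q0, q + 2 * q0 + 1} : Set ℕ) :=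
      AddSubmonoid.subset_closure (by simp)
    have m4 : q + 2*q0 + 1 ∈ AddSubmonoid.closure ({q, q + 2 * q0 - 1, q + 2 * q0, q + 2 * q0 + 1} : Set ℕ) :=
      AddSubmonoid.subset_closure (by simp)
    have smul : ∀ (n x : ℕ), x ∈ AddSubmonoid.closure ({q, q + 2 * q0 - 1, q + 2 * q0, q + 2 * q0 + 1} : Set ℕ) →
        n * x ∈ AddSubmonoid.closure ({q, q + 2 * q0 - 1, q + 2 * q0, q + 2 * q0 + 1} : Set ℕ) := by
      intro n x hx
      simpa [nsmul_eq_mul] using AddSubmonoid.nsmul_mem _ hx n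
    exact AddSubmonoid.add_mem _ (AddSubmonoid.add_mem _ (AddSubmonoid.add_mem _
      (smul a _ m1) (smul b _ m2)) (smul c _ m3)) (smul d _ m4)


/-- upper bound: the candidate Apéry element has a representation -/
lemma upper (q0 q i j : ℕ) (hq0 : 2 ≤ q0) (hq : q = 2*q0^2) (hi : i < 2*q0) (hj : j < q0) :
    ∃ a b c d : ℕ, a*q + b*(q+2*q0-1) + c*(q+2*q0) + d*(q+2*q0+1)
      = q*(gfun q0 i j) + 2*q0*j + i := by
  subst hq
  have h1 : (1:ℕ) ≤ 2*q0^2 + 2*q0 := by nlinarith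
  unfold gfun
  split_ifs with c1 c2 c3
  · refine ⟨0, 0, j - i, i, ?_⟩
    zify [c1, h1]
    ring
  · refine ⟨0, 2*q0 - i, i + j + 1 - 2*q0, 0, ?_⟩
    zify [c2, h1, le_of_lt hi]
    ring
  · refine ⟨0, 0, j + q0 - i, i, ?_⟩
    zify [c3, h1]
    ring
  · refine ⟨0, 2*q0 - i, i + j + 1 - q0, 0, ?_⟩
    have : q0 ≤ i + j + 1 := by omega
    zify [this, h1, le_of_lt hi]
    ring


lemma coreZ (Q0 I J N A HZ F K : ℤ) (hQ : 2 ≤ Q0) (hI0 : 0 ≤ I) (hI : I < 2*Q0)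
    (hJ0 : 0 ≤ J) (hJ : J < Q0) (hN : 0 ≤ N) (hA : 0 ≤ A) (hHZ : 0 ≤ HZ)
    (hnf : N + F = Q0*HZ + J) (hub : I + 2*Q0*F ≤ N) (hlb : -N ≤ I + 2*Q0*F)
    (hK : K = A + N + HZ) :
    (I ≤ J ∧ J ≤ K) ∨ (2*Q0 ≤ I+J+1 ∧ J < I ∧ J+1 ≤ K)
      ∨ (I ≤ J + Q0 ∧ J+Q0+1 ≤ K) ∨ (J + Q0 + 2 ≤ K) := by
  obtain h0 | h1 | h2 : HZ = 0 ∨ HZ = 1 ∨ 2 ≤ HZ := by omega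
  · rw [h0] at hnf hK
    simp only [mul_zero, zero_add, add_zero] at hnf hK
    obtain hf1 | hf0 | hfm1 | hfm2 : 1 ≤ F ∨ F = 0 ∨ F = -1 ∨ F ≤ -2 := by omega
    · exfalso
      nlinarith [mul_nonneg (by omega : (0:ℤ) ≤ 2*Q0) (by omega : (0:ℤ) ≤ F - 1)]
    · rw [hf0] at hnf hub
      exact Or.inl ⟨by linarith, by linarith⟩
    · rw [hfm1] at hnf hlb
      refine Or.inr (Or.inl ⟨by linarith, by linarith, by linarith⟩)
    · exfalso
      nlinarith [mul_nonneg (by omega : (0:ℤ) ≤ 2*Q0 - 1) (by omega : (0:ℤ) ≤ -F - 2)]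
  · rw [h1] at hnf hK
    simp only [mul_one] at hnf hK
    obtain hf1 | hf0 | hfm : 1 ≤ F ∨ F = 0 ∨ F ≤ -1 := by omega
    · exfalso
      nlinarith [mul_nonneg (by omega : (0:ℤ) ≤ 2*Q0) (by omega : (0:ℤ) ≤ F - 1)]
    · rw [hf0] at hnf hub
      exact Or.inr (Or.inr (Or.inl ⟨by linarith, by linarith⟩))
    · exact Or.inr (Or.inr (Or.inr (by linarith)))
  · obtain hfl | hfg : F ≤ HZ - 2 ∨ HZ - 1 ≤ F := by omega
    · refine Or.inr (Or.inr (Or.inr ?_))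
      nlinarith [mul_nonneg (by omega : (0:ℤ) ≤ Q0) (by omega : (0:ℤ) ≤ HZ - 2)]
    · refine Or.inr (Or.inr (Or.inr ?_))
      have hf1 : 1 ≤ F := by omega
      nlinarith [mul_nonneg (by omega : (0:ℤ) ≤ 2*Q0) (by omega : (0:ℤ) ≤ F - 1)]

/-- core lower bound: any representation has at least `gfun q0 i j` multiples of q -/
lemma core (q0 q a b c d k i j : ℕ) (hq0 : 2 ≤ q0) (hq : q = 2*q0^2)
    (hi : i < 2*q0) (hj : j < q0)
    (heq : a*q + b*(q+2*q0-1) + c*(q+2*q0) + d*(q+2*q0+1) = q*k + 2*q0*j + i) :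
    gfun q0 i j ≤ k := by
  have hq8 : 8 ≤ q := by nlinarith
  have h1 : (1:ℕ) ≤ q + 2*q0 := by omega
  zify [h1] at heq
  have hqZ : (q:ℤ) = 2*(q0:ℤ)^2 := by exact_mod_cast hq
  obtain ⟨N, hN⟩ : ∃ N:ℤ, N = (b:ℤ)+c+d := ⟨_, rfl⟩
  obtain ⟨HZ, hHZ⟩ : ∃ z:ℤ, z = (k:ℤ) - a - N := ⟨_, rfl⟩
  obtain ⟨F, hF⟩ : ∃ F:ℤ, F = (q0:ℤ)*HZ - N + j := ⟨_, rfl⟩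
  have hqh : (q:ℤ)*HZ = 2*(q0:ℤ)*N + ((d:ℤ) - b) - (2*(q0:ℤ)*j + i) := by
    rw [hHZ, hN]; linear_combination -heq
  have hf : (d:ℤ) - b = (i:ℤ) + 2*(q0:ℤ)*F := by
    linear_combination -hqh + HZ*hqZ - 2*(q0:ℤ)*hF
  have hNnn : (0:ℤ) ≤ N := by rw [hN]; positivity
  have hbN : (b:ℤ) ≤ N := by
    rw [hN]; have := Int.natCast_nonneg c; have := Int.natCast_nonneg d; omega
  have hdN : (d:ℤ) ≤ N := by
    rw [hN]; have := Int.natCast_nonneg c; have := Int.natCast_nonneg b; omega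
  have hb0 : (0:ℤ) ≤ (b:ℤ) := Int.natCast_nonneg b
  have hd0 : (0:ℤ) ≤ (d:ℤ) := Int.natCast_nonneg d
  have hI0 : (0:ℤ) ≤ (i:ℤ) := Int.natCast_nonneg i
  have hIlt : (i:ℤ) < 2*(q0:ℤ) := by exact_mod_cast hi
  have hJ0 : (0:ℤ) ≤ (j:ℤ) := Int.natCast_nonneg j
  have hJlt : (j:ℤ) < (q0:ℤ) := by exact_mod_cast hj
  have hQ2 : (2:ℤ) ≤ (q0:ℤ) := by exact_mod_cast hq0
  have hub : (i:ℤ) + 2*(q0:ℤ)*F ≤ N := by rw [← hf]; omega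
  have hlb : -N ≤ (i:ℤ) + 2*(q0:ℤ)*F := by rw [← hf]; omega
  have hHZnn : 0 ≤ HZ := by
    by_contra hcon
    push_neg at hcon
    have h2 : HZ ≤ -1 := by omega
    have h3 : (q:ℤ)*HZ ≤ (q:ℤ)*(-1) :=
      mul_le_mul_of_nonneg_left h2 (by exact_mod_cast Nat.zero_le q)
    nlinarith [mul_nonneg (by omega : (0:ℤ) ≤ 2*(q0:ℤ) - 1) hNnn,
      mul_nonneg (by omega : (0:ℤ) ≤ 2*(q0:ℤ)) (by omega : (0:ℤ) ≤ (q0:ℤ) - 1 - j)]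
  have hnf : N + F = (q0:ℤ)*HZ + j := by rw [hF]; ring
  have hK : (k:ℤ) = (a:ℤ) + N + HZ := by rw [hHZ]; ring
  have := coreZ (q0:ℤ) i j N a HZ F k hQ2 hI0 hIlt hJ0 hJlt hNnn
    (Int.natCast_nonneg a) hHZnn hnf hub hlb hK
  rcases this with ⟨hij, hjk⟩ | ⟨hbig, hji, hjk⟩ | ⟨hmid, hjk⟩ | hjk
  · rw [gfun_of_le q0 i j (by exact_mod_cast hij)]
    exact_mod_cast hjk
  · rw [gfun_of_big q0 i j (by exact_mod_cast hbig) (by exact_mod_cast hji)]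
    exact_mod_cast hjk
  · exact le_trans (gfun_le_mid q0 i j (by exact_mod_cast hmid)) (by exact_mod_cast hjk)
  · exact le_trans (gfun_le_top q0 i j) (by exact_mod_cast hjk)


lemma hkey (M x y r r' : ℕ) (hM : 0 < M) (hr : r < M) (hr' : r' < M)
    (h : M*x + r = M*y + r') : x = y ∧ r = r' := by
  have hx : (M*x + r)/M = x := by rw [Nat.mul_add_div hM, Nat.div_eq_of_lt hr, add_zero]
  have hy : (M*y + r')/M = y := by rw [Nat.mul_add_div hM, Nat.div_eq_of_lt hr', add_zero]
  have hxy : x = y := by rw [← hx, h, hy]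
  subst hxy
  exact ⟨rfl, Nat.add_left_cancel h⟩

lemma rep_unique (q0 q k i j k' i' j' : ℕ) (hq0 : 2 ≤ q0) (hq : q = 2*q0^2)
    (hi : i < 2*q0) (hj : j < q0) (hi' : i' < 2*q0) (hj' : j' < q0)
    (h : q*k + 2*q0*j + i = q*k' + 2*q0*j' + i') : k = k' ∧ j = j' ∧ i = i' := by
  have hqpos : 0 < q := by nlinarith
  have hr : 2*q0*j + i < q := by nlinarith
  have hr' : 2*q0*j' + i' < q := by nlinarith
  obtain ⟨hk, hrr⟩ := hkey q k k' (2*q0*j + i) (2*q0*j' + i') hqpos hr hr' (by omega)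
  have h2 : 2*q0*j + i = 2*q0*j' + i' := hrr
  have := hkey (2*q0) j j' i i' (by omega) hi hi' (by omega)
  exact ⟨hk, this.1, this.2⟩

def gapSet (q0 q : ℕ) : Finset ℕ :=
  (Finset.range q0).biUnion fun j => (Finset.range (2*q0)).biUnion fun i =>
    (Finset.range (gfun q0 i j)).image fun k => q*k + 2*q0*j + i

lemma mem_gapSet (q0 q n : ℕ) : n ∈ gapSet q0 q ↔
    ∃ j < q0, ∃ i < 2*q0, ∃ k < gfun q0 i j, n = q*k + 2*q0*j + i := by
  simp only [gapSet, Finset.mem_biUnion, Finset.mem_image, Finset.mem_range]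
  constructor
  · rintro ⟨j, hj, i, hi, k, hk, rfl⟩; exact ⟨j, hj, i, hi, k, hk, rfl⟩
  · rintro ⟨j, hj, i, hi, k, hk, rfl⟩; exact ⟨j, hj, i, hi, k, hk, rfl⟩

lemma gaps_eq (q0 q : ℕ) (hq0 : 2 ≤ q0) (hq : q = 2*q0^2) :
    {n : ℕ | n ∉ AddSubmonoid.closure
      ({q, q + 2 * q0 - 1, q + 2 * q0, q + 2 * q0 + 1} : Set ℕ)} = ↑(gapSet q0 q) := by
  have hqpos : 0 < q := by nlinarith
  have h2q0 : 0 < 2*q0 := by omega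
  ext n
  simp only [Set.mem_setOf_eq, Finset.coe_sort_coe, Finset.mem_coe, mem_gapSet]
  constructor
  · intro hn
    set k := n / q with hk
    set r := n % q with hr
    set i := r % (2*q0) with hi
    set j := r / (2*q0) with hj
    have hrq : r < q := Nat.mod_lt _ hqpos
    have hilt : i < 2*q0 := Nat.mod_lt _ h2q0
    have hjlt : j < q0 := by
      rw [hj, Nat.div_lt_iff_lt_mul h2q0]
      nlinarith
    have hnrep : n = q*k + (2*q0*j + i) := by
      have h2 : 2*q0*j + i = r := Nat.div_add_mod r (2*q0)
      have h1' : q*k + r = n := Nat.div_add_mod n q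
      rw [h2]; exact h1'.symm
    refine ⟨j, hjlt, i, hilt, k, ?_, by omega⟩
    by_contra hcon
    push_neg at hcon
    obtain ⟨m, hm⟩ := Nat.le.dest hcon
    obtain ⟨a, b, c, d, hrep⟩ := upper q0 q i j hq0 hq hilt hjlt
    apply hn
    rw [mem_closure_iff_rep q0 q n hq0 hq]
    refine ⟨a + m, b, c, d, ?_⟩
    have h1 : (1:ℕ) ≤ q + 2*q0 := by omega
    zify [h1] at hrep ⊢
    have hnz : (n:ℤ) = q*k + (2*q0*j + i) := by exact_mod_cast hnrep
    have hmz : (k:ℤ) = gfun q0 i j + m := by exact_mod_cast hm.symm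
    rw [hnz, hmz]
    linear_combination -hrep
  · rintro ⟨j, hjlt, i, hilt, k, hk, rfl⟩
    intro hmem
    rw [mem_closure_iff_rep q0 q _ hq0 hq] at hmem
    obtain ⟨a, b, c, d, hrep⟩ := hmem
    have := core q0 q a b c d k i j hq0 hq hilt hjlt (by omega)
    omega

lemma card_gapSet (q0 q : ℕ) (hq0 : 2 ≤ q0) (hq : q = 2*q0^2) :
    (gapSet q0 q).card = ∑ j ∈ Finset.range q0, ∑ i ∈ Finset.range (2*q0), gfun q0 i j := by
  have hqpos : 0 < q := by nlinarith
  unfold gapSet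
  rw [Finset.card_biUnion]
  · refine Finset.sum_congr rfl fun j hj => ?_
    rw [Finset.card_biUnion]
    · refine Finset.sum_congr rfl fun i hi => ?_
      rw [Finset.card_image_of_injective _ (fun x y hxy => by
        have : q*x = q*y := by omega
        exact Nat.eq_of_mul_eq_mul_left hqpos this), Finset.card_range]
    · intro i hi i' hi' hne
      simp only [Finset.mem_coe, Finset.mem_range] at hj hi hi'
      rw [Function.onFun, Finset.disjoint_left]
      rintro n hn hn'
      simp only [Finset.mem_image, Finset.mem_range] at hn hn'
      obtain ⟨k, hk, hkeq⟩ := hn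
      obtain ⟨k', hk', hkeq'⟩ := hn'
      exact hne ((rep_unique q0 q k i j k' i' j hq0 hq hi hj hi' hj
        (by omega)).2.2 ▸ rfl)
  · intro j hj j' hj' hne
    simp only [Finset.mem_coe, Finset.mem_range] at hj hj'
    rw [Function.onFun, Finset.disjoint_left]
    rintro n hn hn'
    simp only [Finset.mem_biUnion, Finset.mem_image, Finset.mem_range] at hn hn'
    obtain ⟨i, hi, k, hk, hkeq⟩ := hn
    obtain ⟨i', hi', k', hk', hkeq'⟩ := hn'
    exact hne (rep_unique q0 q k i j k' i' j' hq0 hq hi hj hi' hj' (by omega)).2.1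


lemma sum_const_chunk (a b C : ℕ) (f : ℕ → ℕ) (h : ∀ i, a ≤ i → i < b → f i = C) :
    ∑ i ∈ Finset.Ico a b, f i = (b - a) * C := by
  rw [show ∑ i ∈ Finset.Ico a b, f i = ∑ _i ∈ Finset.Ico a b, C from
    Finset.sum_congr rfl (fun i hi => by
      rw [Finset.mem_Ico] at hi; exact h i hi.1 hi.2),
    Finset.sum_const, Nat.card_Ico, smul_eq_mul]

lemma inner_lo (q0 c j : ℕ) (hc : q0 = 2*c) (hc1 : 1 ≤ c) (hj : j < c) :
    ∑ i ∈ Finset.range (2*q0), gfun q0 i j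
      = (j+1)*j + q0*(j+q0+1) + (q0-2*j-2)*(j+q0+2) + (j+1)*(j+1) := by
  rw [Finset.range_eq_Ico]
  rw [← Finset.sum_Ico_consecutive (gfun q0 · j) (by omega : 0 ≤ j+1) (by omega : j+1 ≤ 2*q0)]
  rw [← Finset.sum_Ico_consecutive (gfun q0 · j) (by omega : j+1 ≤ j+q0+1) (by omega : j+q0+1 ≤ 2*q0)]
  rw [← Finset.sum_Ico_consecutive (gfun q0 · j) (by omega : j+q0+1 ≤ 2*q0-1-j) (by omega : 2*q0-1-j ≤ 2*q0)]
  rw [sum_const_chunk 0 (j+1) j _ (fun i h1 h2 => by unfold gfun; split_ifs <;> omega)]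
  rw [sum_const_chunk (j+1) (j+q0+1) (j+q0+1) _ (fun i h1 h2 => by unfold gfun; split_ifs <;> omega)]
  rw [sum_const_chunk (j+q0+1) (2*q0-1-j) (j+q0+2) _ (fun i h1 h2 => by unfold gfun; split_ifs <;> omega)]
  rw [sum_const_chunk (2*q0-1-j) (2*q0) (j+1) _ (fun i h1 h2 => by unfold gfun; split_ifs <;> omega)]
  have e1 : j+1-0 = j+1 := by omega
  have e2 : j+q0+1-(j+1) = q0 := by omega
  have e3 : 2*q0-1-j-(j+q0+1) = q0-2*j-2 := by omega
  have e4 : 2*q0-(2*q0-1-j) = j+1 := by omega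
  rw [e1, e2, e3, e4]
  ring

lemma inner_hi (q0 c j : ℕ) (hc : q0 = 2*c) (hc1 : 1 ≤ c) (hj1 : c ≤ j) (hj2 : j < q0) :
    ∑ i ∈ Finset.range (2*q0), gfun q0 i j
      = (j+1)*j + (2*q0-2*j-2)*(j+q0+1) + (j+1)*(j+1) := by
  rw [Finset.range_eq_Ico]
  rw [← Finset.sum_Ico_consecutive (gfun q0 · j) (by omega : 0 ≤ j+1) (by omega : j+1 ≤ 2*q0)]
  rw [← Finset.sum_Ico_consecutive (gfun q0 · j) (by omega : j+1 ≤ 2*q0-1-j) (by omega : 2*q0-1-j ≤ 2*q0)]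
  rw [sum_const_chunk 0 (j+1) j _ (fun i h1 h2 => by unfold gfun; split_ifs <;> omega)]
  rw [sum_const_chunk (j+1) (2*q0-1-j) (j+q0+1) _ (fun i h1 h2 => by unfold gfun; split_ifs <;> omega)]
  rw [sum_const_chunk (2*q0-1-j) (2*q0) (j+1) _ (fun i h1 h2 => by unfold gfun; split_ifs <;> omega)]
  have e1 : j+1-0 = j+1 := by omega
  have e3 : 2*q0-1-j-(j+1) = 2*q0-2*j-2 := by omega
  have e4 : 2*q0-(2*q0-1-j) = j+1 := by omega
  rw [e1, e3, e4]
  ring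

lemma gauss (n : ℕ) : ∑ j ∈ Finset.range n, (j:ℤ) * 2 = (n:ℤ)^2 - n := by
  induction n with
  | zero => simp
  | succ m ih => rw [Finset.sum_range_succ, ih]; push_cast; ring

lemma total_sum (c : ℕ) (hc1 : 1 ≤ c) :
    ∑ j ∈ Finset.range (2*c), ∑ i ∈ Finset.range (2*(2*c)), gfun (2*c) i j
      = 16*c^3 - c^2 - 2*c := by
  have key : (∑ j ∈ Finset.range (2*c), ∑ i ∈ Finset.range (2*(2*c)), gfun (2*c) i j)
      + (c^2 + 2*c) = 16*c^3 := by
    have hsplit : ∑ j ∈ Finset.range (2*c), ∑ i ∈ Finset.range (2*(2*c)), gfun (2*c) i j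
        = (∑ j ∈ Finset.Ico 0 c, ∑ i ∈ Finset.range (2*(2*c)), gfun (2*c) i j)
          + ∑ j ∈ Finset.Ico c (2*c), ∑ i ∈ Finset.range (2*(2*c)), gfun (2*c) i j := by
      rw [Finset.range_eq_Ico,
        ← Finset.sum_Ico_consecutive _ (by omega : 0 ≤ c) (by omega : c ≤ 2*c)]
    have hA : ∑ j ∈ Finset.Ico 0 c, ∑ i ∈ Finset.range (2*(2*c)), gfun (2*c) i j
        = ∑ j ∈ Finset.Ico 0 c,
            ((j+1)*j + (2*c)*(j+2*c+1) + (2*c-2*j-2)*(j+2*c+2) + (j+1)*(j+1)) := by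
      refine Finset.sum_congr rfl fun j hj => ?_
      rw [Finset.mem_Ico] at hj
      rw [inner_lo (2*c) c j rfl hc1 hj.2]
    have hB : ∑ j ∈ Finset.Ico c (2*c), ∑ i ∈ Finset.range (2*(2*c)), gfun (2*c) i j
        = ∑ j ∈ Finset.Ico c (2*c),
            ((j+1)*j + (2*(2*c)-2*j-2)*(j+2*c+1) + (j+1)*(j+1)) := by
      refine Finset.sum_congr rfl fun j hj => ?_
      rw [Finset.mem_Ico] at hj
      exact inner_hi (2*c) c j rfl hc1 hj.1 hj.2
    rw [hsplit, hA, hB]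
    have hcast : ∀ x y : ℕ, (x:ℤ) = (y:ℤ) → x = y := fun x y h => by exact_mod_cast h
    apply hcast
    rw [Nat.cast_add, Nat.cast_add, Nat.cast_sum, Nat.cast_sum]
    have ZA : ∑ j ∈ Finset.Ico 0 c,
        (((j+1)*j + (2*c)*(j+2*c+1) + (2*c-2*j-2)*(j+2*c+2) + (j+1)*(j+1) : ℕ) : ℤ)
        = ∑ j ∈ Finset.Ico 0 c,
          (((j:ℤ)+1)*j + (2*(c:ℤ))*(j+2*c+1) + (2*(c:ℤ)-2*j-2)*((j:ℤ)+2*c+2) + ((j:ℤ)+1)*(j+1)) := by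
      refine Finset.sum_congr rfl fun j hj => ?_
      rw [Finset.mem_Ico] at hj
      have h1 : 2*j ≤ 2*c := by omega
      have h2 : 2 ≤ 2*c - 2*j := by omega
      push_cast [h1, h2]
      ring
    have ZB : ∑ j ∈ Finset.Ico c (2*c),
        (((j+1)*j + (2*(2*c)-2*j-2)*(j+2*c+1) + (j+1)*(j+1) : ℕ) : ℤ)
        = ∑ j ∈ Finset.Ico c (2*c),
          (((j:ℤ)+1)*j + (2*(2*(c:ℤ))-2*j-2)*((j:ℤ)+2*c+1) + ((j:ℤ)+1)*(j+1)) := by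
      refine Finset.sum_congr rfl fun j hj => ?_
      rw [Finset.mem_Ico] at hj
      have h1 : 2*j ≤ 2*(2*c) := by omega
      have h2 : 2 ≤ 2*(2*c) - 2*j := by omega
      push_cast [h1, h2]
      ring
    rw [ZA, ZB]
    rw [Finset.sum_Ico_eq_sum_range
      (fun j => ((j:ℤ)+1)*j + (2*(2*(c:ℤ))-2*j-2)*((j:ℤ)+2*c+1) + ((j:ℤ)+1)*(j+1)) c (2*c)]
    have h2c : 2*c - c = c := by omega
    rw [h2c, ← Finset.range_eq_Ico, ← Finset.sum_add_distrib]
    have hpt : ∀ t ∈ Finset.range c,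
        ((((t:ℤ)+1)*t + (2*(c:ℤ))*(t+2*c+1) + (2*(c:ℤ)-2*t-2)*((t:ℤ)+2*c+2) + ((t:ℤ)+1)*(t+1))
          + ((((c+t:ℕ):ℤ)+1)*((c+t:ℕ):ℤ) + (2*(2*(c:ℤ))-2*((c+t:ℕ):ℤ)-2)*(((c+t:ℕ):ℤ)+2*c+1)
            + (((c+t:ℕ):ℤ)+1)*(((c+t:ℕ):ℤ)+1)))
        = (16*(c:ℤ)^2 + c - 4) - 4*t := by
      intro t ht
      push_cast
      ring
    rw [Finset.sum_congr rfl hpt, Finset.sum_sub_distrib, Finset.sum_const,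
      Finset.card_range, nsmul_eq_mul]
    have g4 : ∑ t ∈ Finset.range c, (4:ℤ)*(t:ℤ) = 2*((c:ℤ)^2 - c) := by
      have hg := gauss c
      calc ∑ t ∈ Finset.range c, (4:ℤ)*(t:ℤ)
          = ∑ t ∈ Finset.range c, ((t:ℤ)*2)*2 := Finset.sum_congr rfl (fun t _ => by ring)
        _ = (∑ t ∈ Finset.range c, (t:ℤ)*2)*2 := (Finset.sum_mul _ _ _).symm
        _ = 2*((c:ℤ)^2 - c) := by rw [hg]; ring
    rw [g4]
    push_cast
    ring
  have := Nat.eq_sub_of_add_eq key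
  rw [this, Nat.sub_sub]

/-- For `q = 2^{2s+1}` with `q₀ = 2^s` (`s ≥ 1`), the numerical semigroup
`H = ⟨q, q+2q₀-1, q+2q₀, q+2q₀+1⟩` has genus `#(ℕ \\ H) = q₀(q-1) - q₀²/4`. -/
theorem stmt14 (s q0 q : ℕ) (hs : 1 ≤ s) (hq0 : q0 = 2 ^ s) (hq : q = 2 * q0 ^ 2) :
    Set.ncard {n : ℕ |
        n ∉ AddSubmonoid.closure
          ({q, q + 2 * q0 - 1, q + 2 * q0, q + 2 * q0 + 1} : Set ℕ)}
      = q0 * (q - 1) - q0 ^ 2 / 4 := by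
  have hc1 : 1 ≤ 2^(s-1) := Nat.one_le_two_pow
  have hq0c : q0 = 2 * 2^(s-1) := by
    have hpow : 2^s = 2^(s-1)*2 := by
      rw [← pow_succ]
      congr 1
      omega
    rw [hq0, hpow]
    ring
  set c : ℕ := 2^(s-1) with hcdef
  have hq02 : 2 ≤ q0 := by omega
  rw [gaps_eq q0 q hq02 hq, Set.ncard_coe_finset, card_gapSet q0 q hq02 hq]
  subst hq
  rw [hq0c]
  rw [total_sum c hc1]
  have e1 : (2*c)^2/4 = c^2 := by
    rw [show (2*c)^2 = c^2*4 from by ring, Nat.mul_div_cancel _ (by norm_num)]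
  rw [e1]
  have e2 : 2*c*(2*(2*c)^2-1) = 16*c^3 - 2*c := by
    have h1 : 1 ≤ 2*(2*c)^2 := by nlinarith
    have h2 : 2*c ≤ 16*c^3 := by nlinarith
    zify [h1, h2]
    ring
  rw [e2, Nat.sub_sub, Nat.sub_sub, Nat.add_comm]

end NumSgpGenus
end

section
/- Let D be a linear series of dimension r and degree d on a smooth projective curve X over an algebraically closed field, and let P ≠ Q be points of X with (D,P)-orders j₀(P) < ... < j_r(P) and (D,Q)-orders j₀(Q) < ... < j_r(Q). Then for every i with 0 ≤ i ≤ r, j_i(P) + j_{r-i}(Q) ≤ d. -/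
/-!
At a point `x`, elements of `D'` whose orders `E(x) + v_x(f)` are pairwise distinct are linearly
independent, so the elements of `D'` vanishing to order at least `j_i(P)` at `P` form a space of
dimension `≥ r + 1 - i`, and those vanishing to order at least `j_{r-i}(Q)` at `Q` a space of
dimension `≥ i + 1`. Inside the `(r + 1)`-dimensional `D'` these two spaces meet nontrivially, and a
nonzero `h` in the intersection gives an effective divisor `E + div h` of degree `d` containing
`j_i(P) P + j_{r-i}(Q) Q`.
-/

open Module Submodule

structure IsUltrametricOrder (F : Type*) {V : Type*} [Field F] [AddCommGroup V] [Module F V]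
    (w : V → ℤ) : Prop where
  map_smul : ∀ (c : F) (f : V), c ≠ 0 → f ≠ 0 → w (c • f) = w f
  min_le_map_add : ∀ f g : V, f ≠ 0 → g ≠ 0 → f + g ≠ 0 → min (w f) (w g) ≤ w (f + g)

namespace IsUltrametricOrder

variable {F V : Type*} [Field F] [AddCommGroup V] [Module F V] {w : V → ℤ}
  (hw : IsUltrametricOrder F w)
include hw

/-- For `w = v_x`, `D' ⊓ filtration (j - E x)` is the paper's `D_j(x)`. -/
def filtration (m : ℤ) : Submodule F V where
  carrier := {f | f = 0 ∨ m ≤ w f}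
  zero_mem' := Or.inl rfl
  add_mem' := by
    rintro f g hf hg
    rcases eq_or_ne f 0 with rfl | hf0
    · simpa using hg
    rcases eq_or_ne g 0 with rfl | hg0
    · simpa using hf
    rcases eq_or_ne (f + g) 0 with hfg | hfg
    · exact Or.inl hfg
    exact Or.inr ((le_min (hf.resolve_left hf0) (hg.resolve_left hg0)).trans
      (hw.min_le_map_add f g hf0 hg0 hfg))
  smul_mem' := by
    rintro c f (rfl | hf)
    · simp
    rcases eq_or_ne c 0 with rfl | hc
    · simp
    rcases eq_or_ne f 0 with rfl | hf0
    · simp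
    exact Or.inr (by rwa [hw.map_smul c f hc hf0])

theorem mem_filtration {m : ℤ} {f : V} : f ∈ hw.filtration m ↔ f = 0 ∨ m ≤ w f := Iff.rfl

theorem linearIndependent_of_strictMono {n : ℕ} {f : Fin n → V} (hne : ∀ i, f i ≠ 0)
    (hf : StrictMono (w ∘ f)) : LinearIndependent F f := by
  induction n with
  | zero => exact linearIndependent_empty_type
  | succ n ih =>
    rw [linearIndependent_finSucc]
    refine ⟨ih (fun i => hne i.succ) (hf.comp (Fin.strictMono_succ)), fun h0 => ?_⟩
    have hspan : span F (Set.range (Fin.tail f)) ≤ hw.filtration (w (f 0) + 1) :=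
      span_le.2 (by rintro _ ⟨i, rfl⟩; exact Or.inr (hf (Fin.succ_pos i)))
    rcases hspan h0 with h | h
    · exact hne 0 h
    · omega

theorem sub_le_finrank_inf_filtration (D : Submodule F V) [FiniteDimensional F D] {n : ℕ}
    {f : Fin n → V} (hD : ∀ i, f i ∈ D) (hne : ∀ i, f i ≠ 0) (hf : StrictMono (w ∘ f))
    (i : Fin n) : n - i ≤ finrank F ↥(D ⊓ hw.filtration (w (f i))) := by
  let g : Set.Ici i → V := fun j => f j
  have hg : LinearIndependent F g :=
    (hw.linearIndependent_of_strictMono hne hf).comp _ Subtype.val_injective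
  have hspan : span F (Set.range g) ≤ D ⊓ hw.filtration (w (f i)) :=
    span_le.2 (by rintro _ ⟨j, rfl⟩; exact ⟨hD j, Or.inr (hf.monotone j.2)⟩)
  have : FiniteDimensional F ↥(D ⊓ hw.filtration (w (f i))) :=
    Submodule.finiteDimensional_of_le inf_le_left
  calc n - i = Fintype.card (Set.Ici i) := by simp
    _ = finrank F (span F (Set.range g)) := (finrank_span_eq_card hg).symm
    _ ≤ _ := Submodule.finrank_mono hspan

theorem sub_le_finrank_inf_filtration_of_orders (D : Submodule F V) [FiniteDimensional F D]
    (e : ℤ) {n : ℕ} {j : Fin n → ℕ} (hj : StrictMono j)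
    (hjD : ∀ i, ∃ f ∈ D, f ≠ 0 ∧ e + w f = j i) (i : Fin n) :
    n - i ≤ finrank F ↥(D ⊓ hw.filtration (j i - e)) := by
  choose f hfD hne hfj using hjD
  have hwf : ∀ k, w (f k) = j k - e := fun k => by linarith [hfj k]
  have hf : StrictMono (w ∘ f) := fun a b hab => by
    simpa only [Function.comp, hwf, sub_lt_sub_iff_right, Nat.cast_lt] using hj hab
  have := hw.sub_le_finrank_inf_filtration D hfD hne hf i
  rwa [hwf] at this

end IsUltrametricOrder

theorem Submodule.exists_mem_inf_ne_zero_of_finrank_lt_add {F V : Type*} [DivisionRing F]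
    [AddCommGroup V] [Module F V] {A B D : Submodule F V} [FiniteDimensional F D]
    (hA : A ≤ D) (hB : B ≤ D) (h : finrank F D < finrank F A + finrank F B) :
    ∃ x ∈ A ⊓ B, x ≠ 0 := by
  have := Submodule.finiteDimensional_of_le hA
  have := Submodule.finiteDimensional_of_le hB
  have hsup := Submodule.finrank_mono (sup_le hA hB)
  have hinf := Submodule.finrank_sup_add_finrank_inf_eq A B
  exact (A ⊓ B).exists_mem_ne_zero_of_ne_bot fun h0 => by
    rw [h0, finrank_bot] at hinf
    omega

theorem apply_add_apply_le_sum {X : Type*} {g : X → ℤ} (hg : ∀ x, 0 ≤ g x) {s : Finset X}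
    (hs : ∀ x ∉ s, g x = 0) {P Q : X} (hPQ : P ≠ Q) : g P + g Q ≤ ∑ x ∈ s, g x := by
  classical
  calc g P + g Q = ∑ x ∈ {P, Q}, g x := (Finset.sum_pair hPQ).symm
    _ ≤ ∑ x ∈ s ∪ {P, Q}, g x :=
      Finset.sum_le_sum_of_subset_of_nonneg Finset.subset_union_right fun x _ _ => hg x
    _ = ∑ x ∈ s, g x :=
      (Finset.sum_subset Finset.subset_union_left fun x _ hx => hs x hx).symm

theorem stmt19_general (F K : Type*) [Field F] [Field K] [Algebra F K]
    (X : Type*) (v : X → K → ℤ)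
    (hvmul : ∀ (x : X) (f g : K), f ≠ 0 → g ≠ 0 → v x (f * g) = v x f + v x g)
    (hvadd : ∀ (x : X) (f g : K), f ≠ 0 → g ≠ 0 → f + g ≠ 0 →
      min (v x f) (v x g) ≤ v x (f + g))
    (hvconst : ∀ (x : X) (c : F), c ≠ 0 → v x (algebraMap F K c) = 0)
    (E : X → ℤ) (d r : ℕ) (D' : Subspace F K)
    (hdim : Module.finrank F D' = r + 1)
    (heff : ∀ f ∈ D', f ≠ 0 → ∀ x : X, 0 ≤ E x + v x f)
    (hdeg : ∀ f ∈ D', f ≠ 0 → ∃ s : Finset X,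
      (∀ x ∉ s, E x + v x f = 0) ∧ ∑ x ∈ s, (E x + v x f) = (d : ℤ))
    (P Q : X) (hPQ : P ≠ Q)
    (jP jQ : Fin (r + 1) → ℕ) (hjPmono : StrictMono jP) (hjQmono : StrictMono jQ)
    (hjP : ∀ m : ℕ, (∃ i, jP i = m) ↔ ∃ f ∈ D', f ≠ 0 ∧ E P + v P f = (m : ℤ))
    (hjQ : ∀ m : ℕ, (∃ i, jQ i = m) ↔ ∃ f ∈ D', f ≠ 0 ∧ E Q + v Q f = (m : ℤ)) :
    ∀ i : Fin (r + 1), jP i + jQ i.rev ≤ d := by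
  intro i
  have hv (x : X) : IsUltrametricOrder F (v x) :=
    ⟨fun c f hc hf => by
      rw [Algebra.smul_def, hvmul x _ _ ((map_ne_zero _).2 hc) hf, hvconst x c hc, zero_add],
    hvadd x⟩
  have : FiniteDimensional F D' := .of_finrank_pos (by omega)
  have hdimP := (hv P).sub_le_finrank_inf_filtration_of_orders D' (E P) hjPmono
    (fun k => (hjP _).1 ⟨k, rfl⟩) i
  have hdimQ := (hv Q).sub_le_finrank_inf_filtration_of_orders D' (E Q) hjQmono
    (fun k => (hjQ _).1 ⟨k, rfl⟩) i.rev
  obtain ⟨h, ⟨⟨hhD, hhP⟩, -, hhQ⟩, hh⟩ :=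
    exists_mem_inf_ne_zero_of_finrank_lt_add inf_le_left inf_le_left
      (lt_of_lt_of_le (by have := Fin.val_rev i; omega) (add_le_add hdimP hdimQ))
  obtain ⟨s, hs, hsd⟩ := hdeg h hhD hh
  have hPQle := apply_add_apply_le_sum (heff h hhD hh) hs hPQ
  have hP := ((hv P).mem_filtration.1 hhP).resolve_left hh
  have hQ := ((hv Q).mem_filtration.1 hhQ).resolve_left hh
  omega

/-- Esteves–Homma (Lemma 1.51).  Let `D'` be an `(r+1)`-dimensional `F`-linear
series inside the function field `K` of a curve `X`: points of `X` carry
discrete valuations `v x` on `K` (multiplicative, ultrametric, trivial on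
constants, with residue field `F`), `E : X → ℤ` is a divisor, every nonzero
`f ∈ D'` satisfies `E + div f ≥ 0` with `deg (E + div f) = d`.  If
`jP, jQ : Fin (r+1) → ℕ` strictly increasingly enumerate the `(D,P)`- and
`(D,Q)`-orders of two distinct points `P ≠ Q`, then
`jP i + jQ (r - i) ≤ d` for all `i`. -/
theorem stmt19 (F K : Type*) [Field F] [Field K] [Algebra F K]
    (X : Type*) (v : X → K → ℤ)
    (hvmul : ∀ (x : X) (f g : K), f ≠ 0 → g ≠ 0 → v x (f * g) = v x f + v x g)
    (hvadd : ∀ (x : X) (f g : K), f ≠ 0 → g ≠ 0 → f + g ≠ 0 →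
      min (v x f) (v x g) ≤ v x (f + g))
    (hvconst : ∀ (x : X) (c : F), c ≠ 0 → v x (algebraMap F K c) = 0)
    (hres : ∀ (x : X) (f g : K), f ≠ 0 → g ≠ 0 → v x f = v x g →
      ∃ c : F, f - c • g = 0 ∨ v x f < v x (f - c • g))
    (E : X → ℤ) (d r : ℕ) (D' : Subspace F K)
    (hdim : Module.finrank F D' = r + 1)
    (heff : ∀ f ∈ D', f ≠ 0 → ∀ x : X, 0 ≤ E x + v x f)
    (hdeg : ∀ f ∈ D', f ≠ 0 → ∃ s : Finset X,
      (∀ x ∉ s, E x + v x f = 0) ∧ ∑ x ∈ s, (E x + v x f) = (d : ℤ))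
    (P Q : X) (hPQ : P ≠ Q)
    (jP jQ : Fin (r + 1) → ℕ) (hjPmono : StrictMono jP) (hjQmono : StrictMono jQ)
    (hjP : ∀ m : ℕ, (∃ i, jP i = m) ↔ ∃ f ∈ D', f ≠ 0 ∧ E P + v P f = (m : ℤ))
    (hjQ : ∀ m : ℕ, (∃ i, jQ i = m) ↔ ∃ f ∈ D', f ≠ 0 ∧ E Q + v Q f = (m : ℤ)) :
    ∀ i : Fin (r + 1), jP i + jQ i.rev ≤ d :=
  stmt19_general F K X v hvmul hvadd hvconst E d r D' hdim heff hdeg P Q hPQ jP jQ hjPmono hjQmono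
    hjP hjQ
end
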